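/- arXiv:1704.02800 — 2 statements merged into one kernel-verified Lean document; each statement's English description precedes it below -/
import Mathlib

section
/- For each (d+1)-colored graph (Γ,γ) of order 2p (d ≥ 3), ω_G(Γ) = ((d−1)!/2)·( p + d − Σ_{i∈Δ_d} g_{î} ) + Σ_{i∈Δ_d} ω_G(Γ_{î}), where for each i ∈ Δ_d, ω_G(Γ_{î}) denotes the sum of the G-degrees of the connected components of the d-colored graph Γ_{î}. -/
/-!
Basic framework: edge-colored graphs à la crystallization theory.

A `(d+1)`-colored graph (finite connected multigraph, regular of degree `d+1`, with a proper
edge-coloring by the color set `C`, `#C = d+1`) is encoded by giving, for each color `c`,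
the perfect matching formed by the `c`-colored edges, i.e. a fixed-point-free involution
`inv c` on the vertex set `V` (connectedness is the separate predicate `Conn`).
-/

structure CGraph (C V : Type) where
  inv : C → V → V
  invol : ∀ c v, inv c (inv c v) = v
  no_fixed : ∀ c v, inv c v ≠ v

namespace CGraph

variable {C V : Type}

/-- `g G B` = number of connected components of the spanning subgraph `Γ_B` consisting of
the edges whose color lies in `B`. -/
noncomputable def g (G : CGraph C V) (B : Set C) : ℕ :=
  Nat.card (Quotient (Relation.EqvGen.setoid (fun v w : V => ∃ c ∈ B, G.inv c v = w)))

/-- connectedness of the colored graph -/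
def Conn (G : CGraph C V) : Prop := G.g Set.univ = 1

/-- the spanning subgraph `Γ_B` of edges colored in `B`, as a colored graph with color set `B` -/
def restrict (G : CGraph C V) (B : Set C) : CGraph B V where
  inv c v := G.inv c.val v
  invol c v := G.invol c.val v
  no_fixed c v := G.no_fixed c.val v

/-- reachability in the colored graph -/
def reach (G : CGraph C V) : V → V → Prop :=
  Relation.EqvGen (fun v w : V => ∃ c, G.inv c v = w)

/-- the connected component of `G` containing `v0`, as a colored graph on the vertices
reachable from `v0` -/
def component (G : CGraph C V) (v0 : V) : CGraph C {w : V // G.reach v0 w} where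
  inv c w := ⟨G.inv c w.val,
    Relation.EqvGen.trans _ _ _ w.property (Relation.EqvGen.rel _ _ ⟨c, rfl⟩)⟩
  invol c w := Subtype.ext (G.invol c w.val)
  no_fixed c w h := G.no_fixed c w.val (congrArg Subtype.val h)

/-- A cyclic permutation of the (finite) color set: a permutation consisting of a single cycle
through all the colors.  Cyclic permutations `ε = (ε_0, …, ε_d)` of the color set, up to
rotation, correspond bijectively to such permutations `σ` (via `σ : ε_j ↦ ε_{j+1}`), and
taking the inverse cyclic permutation corresponds to `σ ↦ σ⁻¹`. -/
def IsCyclicPerm (σ : Equiv.Perm C) : Prop := σ.IsCycle ∧ ∀ c, σ c ≠ c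

/-- Euler characteristic `χ_σ(Γ) = Σ_{j} g_{ε_j ε_{j+1}} + (1-(n-1))·p` of the surface of the
regular embedding associated with the cyclic permutation `σ`; here `n = #C`, the graph has
order `2p` (i.e. `p = (#V)/2`), and the consecutive pairs `{ε_j, ε_{j+1}}` are exactly the
pairs `{c, σ c}`, `c ∈ C`. -/
noncomputable def chi (G : CGraph C V) (σ : Equiv.Perm C) : ℚ :=
  (∑ᶠ c : C, (G.g {c, σ c} : ℚ)) +
    (2 - (Nat.card C : ℚ)) * ((Nat.card V : ℚ) / 2)

/-- the genus `ρ_σ` of the regular embedding associated with `σ`: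
for a connected graph it is `(2 - χ_σ)/2`; in general (`g G Set.univ` connected components)
it is the sum of the genera of the connected components, matching the convention that the
genus/G-degree of a disconnected colored graph is the sum over its connected components. -/
noncomputable def rho (G : CGraph C V) (σ : Equiv.Perm C) : ℚ :=
  (2 * (G.g Set.univ : ℚ) - G.chi σ) / 2

/-- the Gurau degree `ω_G(Γ) = Σ ρ_ε(Γ)`, the sum over the cyclic permutations of the color
set up to inverse; each class `{σ, σ⁻¹}` has `ρ_σ = ρ_{σ⁻¹}`, whence the division by `2`. -/
noncomputable def omegaG (G : CGraph C V) : ℚ :=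
  (∑ᶠ σ : {σ : Equiv.Perm C // IsCyclicPerm σ}, G.rho σ.val) / 2

/-- bipartiteness -/
def Bipartite (G : CGraph C V) : Prop := ∃ f : V → Bool, ∀ c v, f (G.inv c v) ≠ f v

/-- color-preserving isomorphism of colored graphs -/
def IsIso {V' : Type} (G : CGraph C V) (G' : CGraph C V') : Prop :=
  ∃ e : V ≃ V', ∀ c v, e (G.inv c v) = G'.inv c (e v)

end CGraph

/-!
Both sides are linear in the component counts `g_B`. In `Σ_σ Σ_c g_{c,σc}` over the `(n-1)!`
cyclic permutations of `n` colours, every ordered pair of distinct colours `(c, c')` occurs as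
`(c, σ c)` exactly `(n-2)!` times, so `ω_G` is an explicit combination of `g_Δ`, `#V` and
`Σ_{c ≠ c'} g_{cc'}`. Applying this also to the `d + 1` graphs `Γ_î`, each pair of colours
survives in exactly `d - 1` of them, and the two-coloured terms cancel in
`ω_G(Γ) - Σ_i ω_G(Γ_î)`.
-/

open Equiv Equiv.Perm Finset Nat

namespace CGraph

section CyclicPerm

variable {α : Type} [Fintype α] [DecidableEq α]

theorem isCyclicPerm_iff_cycleType {σ : Perm α} :
    IsCyclicPerm σ ↔ σ.cycleType = {Fintype.card α} := by
  constructor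
  · rintro ⟨hcycle, hfix⟩
    have hsupp : σ.support = univ := eq_univ_of_forall fun c => mem_support.2 (hfix c)
    rw [hcycle.cycleType, hsupp, Finset.card_univ]
  · intro h
    have hcycle : σ.IsCycle := card_cycleType_eq_one.1 (by simp [h])
    have hsupp : σ.support = univ :=
      eq_univ_of_card _ (by rw [← sum_cycleType, h, Multiset.sum_singleton])
    exact ⟨hcycle, fun c => mem_support.1 (hsupp ▸ mem_univ c)⟩

instance : DecidablePred (IsCyclicPerm : Perm α → Prop) :=
  fun _ => decidable_of_iff _ isCyclicPerm_iff_cycleType.symm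

theorem IsCyclicPerm.conj {σ : Perm α} (τ : Perm α) (h : IsCyclicPerm σ) :
    IsCyclicPerm (τ * σ * τ⁻¹) := by
  rw [isCyclicPerm_iff_cycleType, cycleType_conj, ← isCyclicPerm_iff_cycleType]
  exact h

theorem card_isCyclicPerm (h2 : 2 ≤ Fintype.card α) :
    #{σ : Perm α | IsCyclicPerm σ} = (Fintype.card α - 1)! := by
  simp_rw [isCyclicPerm_iff_cycleType]
  rw [card_of_cycleType_singleton h2 le_rfl, Nat.choose_self, mul_one]

/-- Conjugating by the transposition of two values `≠ c` moves one fiber of `σ ↦ σ c` onto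
the other, so the `card α - 1` nonempty fibers have the same size. -/
theorem card_isCyclicPerm_apply_eq {c c' : α} (h : c' ≠ c) :
    #{σ : Perm α | IsCyclicPerm σ ∧ σ c = c'} = (Fintype.card α - 2)! := by
  have hfiber : ∀ c'' ≠ c, #{σ : Perm α | IsCyclicPerm σ ∧ σ c = c''} =
      #{σ : Perm α | IsCyclicPerm σ ∧ σ c = c'} := by
    intro c'' h''
    have hτc : swap c'' c' c = c := swap_apply_of_ne_of_ne h''.symm h.symm
    refine card_nbij' (fun σ => swap c'' c' * σ * swap c'' c')
      (fun σ => swap c'' c' * σ * swap c'' c') ?_ ?_ ?_ ?_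
    all_goals intro σ hσ; simp only [coe_filter, mem_univ, true_and, Set.mem_ofPred_eq] at hσ ⊢
    · refine ⟨by simpa using hσ.1.conj (swap c'' c'), ?_⟩
      simp [Perm.mul_apply, hτc, hσ.2]
    · refine ⟨by simpa using hσ.1.conj (swap c'' c'), ?_⟩
      simp [Perm.mul_apply, hτc, hσ.2]
    · simp [mul_assoc]
    · simp [mul_assoc]
  have hempty : #{σ : Perm α | IsCyclicPerm σ ∧ σ c = c} = 0 :=
    card_eq_zero.2 (filter_eq_empty_iff.2 fun σ _ hσ => hσ.1.2 c hσ.2)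
  have h2 : 2 ≤ Fintype.card α := Fintype.one_lt_card_iff.2 ⟨c', c, h⟩
  have htotal : (Fintype.card α - 1)! =
      (Fintype.card α - 1) * #{σ : Perm α | IsCyclicPerm σ ∧ σ c = c'} := by
    rw [← card_isCyclicPerm h2, card_eq_sum_card_fiberwise (f := fun σ => σ c) (t := univ)
      (fun _ _ => mem_univ _), ← sum_erase_add _ _ (mem_univ c)]
    simp only [filter_filter]
    rw [hempty, add_zero, sum_congr rfl fun c'' hc'' => hfiber c'' (ne_of_mem_erase hc''),
      sum_const, card_erase_of_mem (mem_univ c), Finset.card_univ, smul_eq_mul]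
  rw [← Nat.mul_factorial_pred (by omega : Fintype.card α - 1 ≠ 0)] at htotal
  exact (Nat.eq_of_mul_eq_mul_left (by omega) htotal).symm

theorem sum_isCyclicPerm_apply {M : Type*} [AddCommMonoid M] (c : α) (f : α → M) :
    ∑ σ : Perm α with IsCyclicPerm σ, f (σ c) =
      (Fintype.card α - 2)! • ∑ c' ∈ univ.erase c, f c' := by
  refine (sum_fiberwise' _ (fun σ : Perm α => σ c) f).symm.trans ?_
  rw [← sum_erase_add _ _ (mem_univ c), smul_sum]
  simp only [sum_const, filter_filter]
  rw [card_eq_zero.2 (filter_eq_empty_iff.2 fun σ _ hσ => hσ.1.2 c hσ.2), zero_smul, add_zero]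
  exact sum_congr rfl fun c' hc' => by rw [card_isCyclicPerm_apply_eq (ne_of_mem_erase hc')]

theorem sum_isCyclicPerm_sum_apply {M : Type*} [AddCommMonoid M] (f : α → α → M) :
    ∑ σ : Perm α with IsCyclicPerm σ, ∑ c, f c (σ c) =
      (Fintype.card α - 2)! • ∑ x ∈ (univ : Finset α).offDiag, f x.1 x.2 := by
  rw [sum_comm]
  simp only [sum_isCyclicPerm_apply, ← smul_sum]
  rw [sum_finset_product' _ univ (fun c => univ.erase c) fun x => by simp [ne_comm]]

end CyclicPerm

end CGraph

namespace Finset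

variable {α M : Type*} [Fintype α] [AddCommMonoid M]

theorem sum_offDiag_subtype (B : Set α) [DecidablePred (· ∈ B)] (f : α → α → M) :
    ∑ x ∈ (univ : Finset B).offDiag, f x.1 x.2 =
      ∑ x ∈ (univ : Finset α).offDiag with x.1 ∈ B ∧ x.2 ∈ B, f x.1 x.2 := by
  refine sum_bij (fun x _ => (x.1.1, x.2.1)) ?_ ?_ ?_ fun _ _ => rfl
  · intro x hx
    simp_all [Subtype.ext_iff]
  · intro x _ y _ h
    simp_all [Prod.ext_iff, Subtype.ext_iff]
  · intro y hy
    simp only [mem_filter, mem_offDiag, mem_univ, true_and] at hy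
    exact ⟨(⟨y.1, hy.2.1⟩, ⟨y.2, hy.2.2⟩), by simp [Subtype.ext_iff, hy.1], rfl⟩

variable [DecidableEq α]

theorem sum_sum_offDiag_filter_ne (f : α → α → M) :
    ∑ i, ∑ x ∈ (univ : Finset α).offDiag with x.1 ≠ i ∧ x.2 ≠ i, f x.1 x.2 =
      (Fintype.card α - 2) • ∑ x ∈ (univ : Finset α).offDiag, f x.1 x.2 := by
  rw [sum_comm' (t' := univ.offDiag) (s' := fun x => univ.filter fun i => x.1 ≠ i ∧ x.2 ≠ i)
    (by intros; simp only [mem_univ, mem_filter, mem_offDiag, true_and]; tauto), smul_sum]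
  refine sum_congr rfl fun x hx => ?_
  have hfilter : (univ.filter fun i => x.1 ≠ i ∧ x.2 ≠ i) = univ \ {x.1, x.2} := by
    ext; simp [eq_comm]
  rw [sum_const, hfilter, card_sdiff_of_subset (subset_univ _), Finset.card_univ,
    card_pair (mem_offDiag.1 hx).2.2]

end Finset

theorem Fintype.card_setOf_ne {α : Type*} [Fintype α] [DecidableEq α] (i : α) :
    Fintype.card {c : α | c ≠ i} = Fintype.card α - 1 := by
  simp only [Fintype.card_subtype, Set.mem_ofPred_eq]
  rw [filter_ne', card_erase_of_mem (mem_univ i), Finset.card_univ]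

namespace CGraph

variable {C V : Type}

theorem g_restrict (G : CGraph C V) (B : Set C) (A : Set B) :
    (G.restrict B).g A = G.g (Subtype.val '' A) := by
  simp only [g, restrict, Set.exists_mem_image]

theorem g_restrict_univ (G : CGraph C V) (B : Set C) : (G.restrict B).g Set.univ = G.g B := by
  rw [g_restrict, Set.image_univ, Subtype.range_val]

theorem g_restrict_pair (G : CGraph C V) (B : Set C) (c c' : B) :
    (G.restrict B).g {c, c'} = G.g {(c : C), (c' : C)} := by
  rw [g_restrict, Set.image_pair]

variable [Fintype C]

theorem rho_eq (G : CGraph C V) (σ : Perm C) :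
    G.rho σ = G.g Set.univ - (2 - Fintype.card C : ℚ) * (Nat.card V / 4)
      - (∑ c, (G.g {c, σ c} : ℚ)) / 2 := by
  rw [rho, chi, finsum_eq_sum_of_fintype, Nat.card_eq_fintype_card]
  ring

variable [DecidableEq C]

theorem four_mul_omegaG {n : ℕ} (hC : Fintype.card C = n + 2) (G : CGraph C V) :
    4 * G.omegaG = (n + 1)! * (2 * G.g Set.univ + n * (Nat.card V / 2))
      - n ! * ∑ x ∈ (univ : Finset C).offDiag, (G.g {x.1, x.2} : ℚ) := by
  have hcard := card_isCyclicPerm (α := C) (by omega)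
  have hpairs := sum_isCyclicPerm_sum_apply fun c c' => (G.g {c, c'} : ℚ)
  rw [hC, show n + 2 - 1 = n + 1 by omega] at hcard
  rw [hC, Nat.add_sub_cancel, nsmul_eq_mul] at hpairs
  rw [omegaG, finsum_eq_sum_of_fintype, ← sum_subtype _ (fun σ => mem_filter_univ σ),
    sum_congr rfl fun σ _ => G.rho_eq σ, sum_sub_distrib, sum_const, ← sum_div, hpairs, hcard,
    nsmul_eq_mul, hC]
  push_cast
  ring

theorem four_mul_sum_omegaG_restrict_ne {n : ℕ} (hC : Fintype.card C = n + 3)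
    (G : CGraph C V) :
    4 * ∑ i, (G.restrict {c | c ≠ i}).omegaG =
      (n + 1)! * (2 * ∑ i, (G.g {c | c ≠ i} : ℚ) + (n + 3) * n * (Nat.card V / 2))
        - (n + 1)! * ∑ x ∈ (univ : Finset C).offDiag, (G.g {x.1, x.2} : ℚ) := by
  have hrestrict (i : C) : 4 * (G.restrict {c | c ≠ i}).omegaG =
      (n + 1)! * (2 * G.g {c | c ≠ i} + n * (Nat.card V / 2))
        - n ! * ∑ x ∈ (univ : Finset C).offDiag with x.1 ≠ i ∧ x.2 ≠ i,
            (G.g {x.1, x.2} : ℚ) := by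
    rw [four_mul_omegaG (n := n) (by rw [Fintype.card_setOf_ne, hC]; omega), g_restrict_univ]
    simp only [g_restrict_pair]
    rw [sum_offDiag_subtype {c | c ≠ i} fun c c' => (G.g {c, c'} : ℚ)]
    rfl
  rw [mul_sum, sum_congr rfl fun i _ => hrestrict i, sum_sub_distrib, ← mul_sum, ← mul_sum,
    sum_sum_offDiag_filter_ne fun c c' => (G.g {c, c'} : ℚ), hC,
    show n + 3 - 2 = n + 1 by omega, nsmul_eq_mul, sum_add_distrib, ← mul_sum, ← mul_sum,
    sum_const, Finset.card_univ, hC, nsmul_eq_mul, Nat.factorial_succ n]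
  push_cast
  ring

theorem omegaG_eq_add_sum_omegaG_restrict_ne {k : ℕ} (hC : Fintype.card C = k + 3)
    (G : CGraph C V) :
    G.omegaG = (k + 1)! / 2 *
        ((k + 2) * G.g Set.univ + Nat.card V / 2 - ∑ i, (G.g {c | c ≠ i} : ℚ)) +
      ∑ i, (G.restrict {c | c ≠ i}).omegaG := by
  have hG := G.four_mul_omegaG (n := k + 1) hC
  have hrestrict := G.four_mul_sum_omegaG_restrict_ne hC
  rw [Nat.factorial_succ (k + 1)] at hG
  push_cast at hG hrestrict ⊢
  linear_combination (hG - hrestrict) / 4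

end CGraph

open CGraph in
theorem stmt4_general {d p : ℕ} (hd : 3 ≤ d) {V : Type}
    (G : CGraph (Fin (d + 1)) V) (hconn : G.Conn) (horder : Nat.card V = 2 * p) :
    G.omegaG = ((d - 1).factorial : ℚ) / 2 *
        ((p : ℚ) + (d : ℚ) - ∑ i : Fin (d + 1), (G.g {c | c ≠ i} : ℚ)) +
      ∑ i : Fin (d + 1), (G.restrict {c | c ≠ i}).omegaG := by
  obtain ⟨k, rfl⟩ : ∃ k, d = k + 2 := ⟨d - 2, by omega⟩
  rw [G.omegaG_eq_add_sum_omegaG_restrict_ne (k := k) (Fintype.card_fin _),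
    show G.g Set.univ = 1 from hconn, horder, show k + 2 - 1 = k + 1 by omega]
  push_cast
  ring

open CGraph in
/-- Gurau–Ryan formula, Lemma `Gurau-Ryan`: for every `(d+1)`-colored graph
of order `2p` (`d ≥ 3`),
`ω_G(Γ) = ((d−1)!/2)·(p + d − Σ_i g_î) + Σ_i ω_G(Γ_î)`,
where `ω_G(Γ_î)` is the G-degree of the (possibly disconnected) `d`-colored graph `Γ_î`,
i.e. the sum of the G-degrees of its connected components. -/
theorem stmt4 {d p : ℕ} (hd : 3 ≤ d) {V : Type} [Finite V]
    (G : CGraph (Fin (d + 1)) V) (hconn : G.Conn) (horder : Nat.card V = 2 * p) :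
    G.omegaG = ((d - 1).factorial : ℚ) / 2 *
        ((p : ℚ) + (d : ℚ) - ∑ i : Fin (d + 1), (G.g {c | c ≠ i} : ℚ)) +
      ∑ i : Fin (d + 1), (G.restrict {c | c ≠ i}).omegaG :=
  stmt4_general hd G hconn horder
end

section
/- If (Γ,γ) is an order-2p crystallization of a closed 3-manifold — i.e. a 4-colored graph with g_{î} = 1 for every i ∈ Δ₃ and χ(K(Γ)) = Σ_{i∈Δ₃} g_{î} − Σ_{{i,j}} g_{ij} + 2p = 0 — then ω_G(Γ) − 3ρ(Γ) = p + 2 − 3·min{ g_{ij} : i,j ∈ Δ₃, i ≠ j }. -/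
/-!
Write `a, b, c` for the involutions of three colors and `z(σ)` for the number of cycles of a
permutation. Every `{a, b}`-residue is the union of two cycles of `a b`, and every component of
the `{a, b, c}`-residue splits into at most two orbits of `⟨a b, b c⟩`; so Jacques' inequality
`z(x) + z(y) + z(x y) ≤ n + 2 · #orbits⟨x, y⟩` for `x = a b`, `y = b c` gives
`g_{ab} + g_{bc} + g_{ac} ≤ p + 2 g_{abc}`. For a crystallization the four bounds of this kind add
up to `χ(K(Γ)) = 0`, so all are sharp; as each pair of colors lies in two 3-residues,
complementary pairs have the same `g`, and `g_{01} + g_{02} + g_{03} = p + 2`. The consecutive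
pairs of a cyclic permutation `ε` are all pairs but `{ε₀, ε₂}` and its complement, so
`ρ_ε = g_{ε₀ε₂} - 1`, whence `ω_G(Γ) = p - 1` and `ρ(Γ) = min g_{ij} - 1`.
-/

open Equiv Function

namespace Relation

variable {α : Type*}

noncomputable def numClasses (r : α → α → Prop) : ℕ :=
  Nat.card (Quotient (EqvGen.setoid r))

def addPair (r : α → α → Prop) (u v : α) : α → α → Prop :=
  fun a b => r a b ∨ (a = u ∧ b = v)

variable {r s t : α → α → Prop} {u v : α}

theorem EqvGen.apply_eq {β : Type*} {f : α → β} (hf : ∀ a b, r a b → f a = f b) {a b : α}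
    (h : EqvGen r a b) : f a = f b :=
  congrArg (Quot.lift f hf) (Quot.eqvGen_sound h)

theorem EqvGen.map {f : α → α} (hf : ∀ a b, r a b → EqvGen s (f a) (f b)) {a b : α}
    (h : EqvGen r a b) : EqvGen s (f a) (f b) :=
  Quotient.exact (s := EqvGen.setoid s) <|
    EqvGen.apply_eq (fun a b hab => Quotient.sound (s := EqvGen.setoid s) (hf a b hab)) h

theorem addPair_le_eqvGen (hr : r ≤ EqvGen s) (huv : EqvGen s u v) :
    addPair r u v ≤ EqvGen s := by
  rintro a b (hab | ⟨rfl, rfl⟩)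
  exacts [hr a b hab, huv]

theorem addPair_mono (h : r ≤ s) : addPair r u v ≤ addPair s u v :=
  fun a b => Or.imp_left (h a b)

theorem le_eqvGen_addPair : r ≤ EqvGen (addPair r u v) :=
  fun _ _ hab => EqvGen.rel _ _ (Or.inl hab)

theorem eqvGen_addPair_self : EqvGen (addPair r u v) u v :=
  EqvGen.rel _ _ (Or.inr ⟨rfl, rfl⟩)

variable [Finite α]

theorem numClasses_le_of_le (h : r ≤ EqvGen s) : numClasses s ≤ numClasses r :=
  Nat.card_le_card_of_surjective (Quotient.map' id (EqvGen.eqvGen_le h)) fun q =>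
    q.inductionOn fun a => ⟨⟦a⟧, rfl⟩

theorem numClasses_congr (h₁ : r ≤ EqvGen s) (h₂ : s ≤ EqvGen r) :
    numClasses r = numClasses s :=
  (numClasses_le_of_le h₂).antisymm (numClasses_le_of_le h₁)

theorem numClasses_le_card (r : α → α → Prop) : numClasses r ≤ Nat.card α :=
  Nat.card_le_card_of_surjective _ Quotient.mk''_surjective

theorem numClasses_addPair_le : numClasses (addPair r u v) ≤ numClasses r :=
  numClasses_le_of_le le_eqvGen_addPair

theorem numClasses_addPair_of_eqvGen (h : EqvGen r u v) :
    numClasses (addPair r u v) = numClasses r :=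
  numClasses_congr (addPair_le_eqvGen (fun _ _ hab => EqvGen.rel _ _ hab) h) le_eqvGen_addPair

/-- The classes of `addPair r u v` are those of `r`, with the class of `v` glued onto that of
`u`. -/
theorem numClasses_addPair_add_one (h : ¬EqvGen r u v) :
    numClasses (addPair r u v) + 1 = numClasses r := by
  classical
  let Q := Quotient (EqvGen.setoid r)
  let Q' := Quotient (EqvGen.setoid (addPair r u v))
  have hu : (⟦u⟧ : Q) ≠ ⟦v⟧ := fun e => h (Quotient.exact e)
  let φ : α → {q : Q // q ≠ ⟦v⟧} := fun a =>
    if ha : (⟦a⟧ : Q) = ⟦v⟧ then ⟨⟦u⟧, hu⟩ else ⟨⟦a⟧, ha⟩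
  have hφ : ∀ a b, addPair r u v a b → φ a = φ b := by
    rintro a b (hab | ⟨rfl, rfl⟩)
    · simp only [φ, Quotient.sound (s := EqvGen.setoid r) (EqvGen.rel _ _ hab)]
    · simp [φ, hu]
  let ψ : {q : Q // q ≠ ⟦v⟧} → Q' := fun q =>
    Quotient.map' id (EqvGen.eqvGen_le le_eqvGen_addPair) q.1
  let e : Q' ≃ {q : Q // q ≠ ⟦v⟧} :=
    { toFun := Quotient.lift φ fun a b hab => EqvGen.apply_eq hφ hab
      invFun := ψ
      left_inv := by
        intro q
        induction q using Quotient.inductionOn with | _ a => ?_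
        by_cases ha : (⟦a⟧ : Q) = ⟦v⟧
        · simp only [φ, ψ, Quotient.lift_mk, dif_pos ha]
          exact Quotient.sound (eqvGen_addPair_self.trans _ _ _
            (EqvGen.eqvGen_le le_eqvGen_addPair _ _ (Quotient.exact ha).symm))
        · simp [φ, ψ, ha]
      right_inv := by
        rintro ⟨q, hq⟩
        induction q using Quotient.inductionOn with | _ a => ?_
        simp [φ, ψ, hq] }
  rw [numClasses, numClasses, Nat.card_congr e, ← Finite.card_option,
    Nat.card_congr (Equiv.optionSubtypeNe _)]

theorem numClasses_le_addPair_add_one : numClasses r ≤ numClasses (addPair r u v) + 1 := by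
  by_cases h : EqvGen r u v
  · exact (numClasses_addPair_of_eqvGen h).ge.trans (Nat.le_succ _)
  · exact (numClasses_addPair_add_one h).ge

/-- Every `t`-class contains the two distinct `s`-classes of `a` and `f a`, for any `a` in it. -/
theorem two_mul_numClasses_le (f : α → α) (hst : s ≤ EqvGen t) (hf : ∀ a, EqvGen t a (f a))
    (hsep : ∀ a, ¬EqvGen s a (f a)) : 2 * numClasses t ≤ numClasses s := by
  let Ψ : Quotient (EqvGen.setoid t) × Bool → Quotient (EqvGen.setoid s) :=
    fun p => ⟦if p.2 then p.1.out else f p.1.out⟧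
  have hpick : ∀ (b : Bool) a, EqvGen t a (if b then a else f a) := by
    rintro (_ | _) a
    exacts [hf a, EqvGen.refl a]
  have hΨ : Injective Ψ := by
    rintro ⟨q, b⟩ ⟨q', b'⟩ he
    have he : EqvGen s _ _ := Quotient.exact he
    obtain rfl : q = q' := by
      rw [← q.out_eq, ← q'.out_eq]
      exact Quotient.sound (((hpick b _).trans _ _ _ (EqvGen.eqvGen_le hst _ _ he)).trans _ _ _
        (hpick b' _).symm)
    cases b <;> cases b' <;> simp only [Bool.false_eq_true, if_false, if_true] at he
    exacts [rfl, (hsep _ he.symm).elim, (hsep _ he).elim, rfl]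
  simpa [numClasses, mul_comm] using Nat.card_le_card_of_injective Ψ hΨ

theorem numClasses_le_two_mul (f : α → α)
    (hcover : ∀ a b, EqvGen t a b → EqvGen s a b ∨ EqvGen s a (f b)) :
    numClasses s ≤ 2 * numClasses t := by
  let Φ : Quotient (EqvGen.setoid t) × Bool → Quotient (EqvGen.setoid s) :=
    fun p => ⟦if p.2 then p.1.out else f p.1.out⟧
  have hΦ : Surjective Φ := by
    intro q
    induction q using Quotient.inductionOn with | _ a => ?_
    rcases hcover a _ (Quotient.exact (Quotient.out_eq (⟦a⟧ : Quotient (EqvGen.setoid t)))).symm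
      with h | h
    exacts [⟨(⟦a⟧, true), Quotient.sound h.symm⟩, ⟨(⟦a⟧, false), Quotient.sound h.symm⟩]
  simpa [numClasses, mul_comm] using Nat.card_le_card_of_surjective Φ hΦ

end Relation

namespace Equiv.Perm

open Relation

variable {α : Type*}

def stepRel (σ : Perm α) : α → α → Prop := fun a b => σ a = b

/-- The number of cycles of `σ`, fixed points included. -/
noncomputable def numCycles (σ : Perm α) : ℕ := numClasses σ.stepRel

theorem eqvGen_stepRel_pow_apply (σ : Perm α) (a : α) (k : ℕ) :
    EqvGen σ.stepRel a ((σ ^ k) a) := by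
  induction k with
  | zero => exact EqvGen.refl a
  | succ k ih => exact ih.trans _ _ _ (EqvGen.rel _ _ (by simp [stepRel, pow_succ']))

theorem _root_.Relation.EqvGen.sameCycle {σ : Perm α} {a b : α} (h : EqvGen σ.stepRel a b) :
    σ.SameCycle a b :=
  (SameCycle.equivalence σ).eqvGen_iff.1 <|
    EqvGen.mono (fun _ _ (hab : σ _ = _) => ⟨1, by simpa using hab⟩) _ _ h

theorem stepRel_mul_le (a b : Perm α) : (a * b).stepRel ≤ EqvGen (a.stepRel ⊔ b.stepRel) :=
  fun x _ (hxy : a (b x) = _) =>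
    (EqvGen.rel x (b x) (Or.inr rfl)).trans _ _ _ (EqvGen.rel _ _ (Or.inl hxy))

theorem numCycles_one [Finite α] : numCycles (1 : Perm α) = Nat.card α :=
  Nat.card_congr <| .symm <| .ofBijective _
    ⟨fun _ _ hab => EqvGen.apply_eq (f := id) (fun _ _ h => h) (Quotient.exact hab),
      Quotient.mk''_surjective⟩

/-- With `σ = a b`, conjugation by `a` inverts `σ`; the parity of `i` in `σ ^ i v = a v` then
produces a fixed point of `a` or of `b`. -/
theorem not_sameCycle_mul_apply {a b : Perm α} (ha : Involutive a) (hb : Involutive b)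
    (ha' : ∀ x, a x ≠ x) (hb' : ∀ x, b x ≠ x) (v : α) : ¬(a * b).SameCycle v (a v) := by
  rintro ⟨i, hi⟩
  set σ := a * b
  have hinv : SemiconjBy a σ σ⁻¹ := by
    ext x
    simp [σ, ha (b x), b.symm_apply_eq.2 (hb x).symm]
  have key : ∀ m : ℤ, a ((σ ^ m) v) = (σ ^ (i - m)) v := fun m => by
    rw [← mul_apply, (hinv.zpow_right m).eq, mul_apply, ← hi, ← mul_apply, inv_zpow', ← zpow_add,
      neg_add_eq_sub]
  obtain ⟨m, rfl | rfl⟩ := i.even_or_odd'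
  · exact ha' _ ((key m).trans (by rw [two_mul, add_sub_cancel_right]))
  · refine hb' ((σ ^ m) v) ?_
    have hb : b = a * σ := by ext x; simp [σ, ha (b x)]
    rw [hb, mul_apply, ← mul_apply σ, ← zpow_one_add, key, add_comm 1 m]
    congr 2
    ring

theorem two_mul_numClasses_sup_le_numCycles_mul [Finite α] {a b : Perm α} (ha : Involutive a)
    (hb : Involutive b) (ha' : ∀ x, a x ≠ x) (hb' : ∀ x, b x ≠ x) :
    2 * numClasses (a.stepRel ⊔ b.stepRel) ≤ numCycles (a * b) :=
  two_mul_numClasses_le a (stepRel_mul_le a b) (fun _ => EqvGen.rel _ _ (Or.inl rfl))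
    (fun x h => not_sameCycle_mul_apply ha hb ha' hb' x h.sameCycle)

theorem eqvGen_sup_mul_apply_apply {a b c : Perm α} (ha : Involutive a) (hb : Involutive b)
    (hc : Involutive c) {x y : α} (h : EqvGen ((a * b).stepRel ⊔ (b * c).stepRel) x y) :
    EqvGen ((a * b).stepRel ⊔ (b * c).stepRel) (b x) (b y) := by
  refine EqvGen.map (fun x y hxy => (EqvGen.rel _ _ ?_).symm) h
  rcases hxy with (hxy : a (b x) = y) | (hxy : b (c x) = y) <;> subst hxy
  · exact Or.inl (by simp [stepRel, hb _, ha _])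
  · exact Or.inr (by simp [stepRel, hb _, hc _])

/-- Every orbit of `⟨a, b, c⟩` is covered by at most two orbits of its subgroup of even words
`⟨a b, b c⟩`, namely those of `x` and `b x`. -/
theorem numClasses_sup_mul_le [Finite α] {a b c : Perm α} (ha : Involutive a)
    (hb : Involutive b) (hc : Involutive c) :
    numClasses ((a * b).stepRel ⊔ (b * c).stepRel) ≤
      2 * numClasses (a.stepRel ⊔ b.stepRel ⊔ c.stepRel) := by
  set s := (a * b).stepRel ⊔ (b * c).stepRel
  have hmap : ∀ {x y}, EqvGen s x y → EqvGen s (b x) (b y) := eqvGen_sup_mul_apply_apply ha hb hc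
  refine numClasses_le_two_mul b fun x y h => ?_
  induction h with
  | rel x y hxy =>
    right
    rcases hxy with ((hxy : a x = y) | (hxy : b x = y)) | (hxy : c x = y) <;> subst hxy
    · exact (EqvGen.rel (b (a x)) x (Or.inl (by simp [stepRel, hb _, ha _]))).symm
    · rw [hb]
      exact EqvGen.refl _
    · exact EqvGen.rel _ _ (Or.inr rfl)
  | refl x => exact Or.inl (EqvGen.refl x)
  | symm x y _ ih =>
    refine ih.imp (EqvGen.symm _ _) fun hxy => ?_
    simpa [hb _] using (hmap hxy).symm
  | trans x y z _ _ ih₁ ih₂ =>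
    rcases ih₁ with h₁ | h₁ <;> rcases ih₂ with h₂ | h₂
    · exact Or.inl (h₁.trans _ _ _ h₂)
    · exact Or.inr (h₁.trans _ _ _ h₂)
    · exact Or.inr (h₁.trans _ _ _ (hmap h₂))
    · exact Or.inl (h₁.trans _ _ _ (by simpa [hb _] using hmap h₂))

variable [DecidableEq α]

theorem stepRel_mul_swap_le (σ : Perm α) (u v : α) :
    (σ * swap u v).stepRel ≤ EqvGen (addPair σ.stepRel u v) := by
  intro a b hab
  simp only [stepRel, mul_apply, swap_apply_def] at hab
  split_ifs at hab with hau hav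
  · subst hau
    exact eqvGen_addPair_self.trans _ _ _ (EqvGen.rel _ _ (Or.inl hab))
  · subst hav
    exact eqvGen_addPair_self.symm.trans _ _ _ (EqvGen.rel _ _ (Or.inl hab))
  · exact EqvGen.rel _ _ (Or.inl hab)

variable [Finite α]

theorem numClasses_addPair_mul_swap (σ : Perm α) (u v : α) :
    numClasses (addPair (σ * swap u v).stepRel u v) = numClasses (addPair σ.stepRel u v) := by
  refine numClasses_congr (addPair_le_eqvGen ?_ eqvGen_addPair_self)
    (addPair_le_eqvGen ?_ eqvGen_addPair_self)
  · exact stepRel_mul_swap_le σ u v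
  · simpa using stepRel_mul_swap_le (σ * swap u v) u v

theorem eqvGen_mul_swap_of_not_eqvGen {σ : Perm α} {u v : α} (h : ¬EqvGen σ.stepRel u v) :
    EqvGen (σ * swap u v).stepRel u v := by
  set τ := σ * swap u v
  -- walking from `u` along `τ` runs through the `σ`-cycle of `v` until it reaches `v`
  have walk : ∀ k : ℕ, EqvGen τ.stepRel u ((σ ^ (k + 1)) v) ∨ EqvGen τ.stepRel u v := by
    intro k
    induction k with
    | zero => exact Or.inl (EqvGen.rel _ _ (by simp [τ, stepRel]))
    | succ k ih =>
      refine ih.elim (fun hk => ?_) Or.inr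
      by_cases hfix : (σ ^ (k + 1)) v = v
      · exact Or.inr (hfix ▸ hk)
      have hne : (σ ^ (k + 1)) v ≠ u := fun e => h (e ▸ eqvGen_stepRel_pow_apply σ v _).symm
      refine Or.inl (hk.trans _ _ _ (EqvGen.rel _ _ ?_))
      simp [τ, stepRel, swap_apply_of_ne_of_ne hne hfix, pow_succ' σ (k + 1)]
  obtain ⟨n, hn⟩ : ∃ n, σ ^ (n + 1) = 1 :=
    ⟨orderOf σ - 1, by rw [Nat.sub_add_cancel (orderOf_pos σ), pow_orderOf_eq_one]⟩
  simpa [hn] using walk n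

theorem numCycles_mul_swap_add_one {σ : Perm α} {u v : α} (h : ¬EqvGen σ.stepRel u v) :
    numCycles (σ * swap u v) + 1 = numCycles σ := by
  rw [numCycles, ← numClasses_addPair_of_eqvGen (eqvGen_mul_swap_of_not_eqvGen h),
    numClasses_addPair_mul_swap, numClasses_addPair_add_one h, numCycles]

theorem numCycles_mul_swap_le (σ : Perm α) (u v : α) :
    numCycles (σ * swap u v) ≤ numCycles σ + 1 :=
  calc numCycles (σ * swap u v)
      ≤ numClasses (addPair (σ * swap u v).stepRel u v) + 1 := numClasses_le_addPair_add_one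
    _ = numClasses (addPair σ.stepRel u v) + 1 := by rw [numClasses_addPair_mul_swap]
    _ ≤ numCycles σ + 1 := Nat.add_le_add_right numClasses_addPair_le 1

theorem numCycles_mul_swap_apply {σ : Perm α} {u : α} (hu : σ u ≠ u) :
    numCycles (σ * swap u (σ u)) = numCycles σ + 1 := by
  set τ := σ * swap u (σ u)
  have hfix : τ (σ u) = σ u := by simp [τ]
  have hsep : ¬EqvGen τ.stepRel u (σ u) := fun huv => hu (huv.sameCycle.eq_of_right hfix).symm
  have := numCycles_mul_swap_add_one hsep
  rw [mul_swap_mul_self] at this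
  omega

theorem numClasses_sup_eq_addPair_mul_swap (x y : Perm α) (u : α) :
    numClasses (x.stepRel ⊔ y.stepRel) =
      numClasses (addPair (x.stepRel ⊔ (y * swap u (y u)).stepRel) u (y u)) := by
  have hy : y * swap u (y u) * swap u (y u) = y := mul_swap_mul_self u (y u) y
  have hpair : EqvGen (x.stepRel ⊔ y.stepRel) u (y u) := EqvGen.rel _ _ (Or.inr rfl)
  refine numClasses_congr (sup_le ?_ ?_) (addPair_le_eqvGen (sup_le ?_ ?_) hpair)
  · exact le_sup_left.trans le_eqvGen_addPair
  · have := stepRel_mul_swap_le (y * swap u (y u)) u (y u)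
    rw [hy] at this
    exact this.trans (EqvGen.mono (addPair_mono le_sup_right))
  · exact le_sup_left.trans fun _ _ => EqvGen.rel _ _
  · exact (stepRel_mul_swap_le y u (y u)).trans (EqvGen.eqvGen_le
      (addPair_le_eqvGen (le_sup_right.trans fun _ _ => EqvGen.rel _ _) hpair))

theorem numCycles_add_numCycles_add_numCycles_mul_le (x y : Perm α) :
    numCycles x + numCycles y + numCycles (x * y) ≤
      Nat.card α + 2 * numClasses (x.stepRel ⊔ y.stepRel) := by
  induction hn : Nat.card α - numCycles y using Nat.strong_induction_on generalizing y with
  | _ n ih =>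
  by_cases hy : y = 1
  · subst hy
    have : numClasses (x.stepRel ⊔ stepRel 1) = numCycles x :=
      numClasses_congr (sup_le (fun _ _ h => EqvGen.rel _ _ h) fun a _ h => h ▸ EqvGen.refl a)
        fun _ _ h => EqvGen.rel _ _ (Or.inl h)
    rw [mul_one, numCycles_one, this]
    omega
  obtain ⟨u, hu⟩ : ∃ u, y u ≠ u := not_forall.1 fun h => hy (Equiv.ext h)
  -- split the fixed point `y u` off the cycle of `y` through `u`, and induct
  set y' := y * swap u (y u)
  have hy : y' * swap u (y u) = y := mul_swap_mul_self u (y u) y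
  have hsplit : numCycles y' = numCycles y + 1 := numCycles_mul_swap_apply hu
  have IH := ih _ (by have : numCycles y' ≤ Nat.card α := numClasses_le_card _; omega) y' rfl
  have horb : numClasses (x.stepRel ⊔ y.stepRel) =
      numClasses (addPair (x.stepRel ⊔ y'.stepRel) u (y u)) :=
    numClasses_sup_eq_addPair_mul_swap x y u
  by_cases hE : EqvGen (x.stepRel ⊔ y'.stepRel) u (y u)
  · have := numCycles_mul_swap_le (x * y') u (y u)
    rw [mul_assoc, hy] at this
    rw [numClasses_addPair_of_eqvGen hE] at horb
    omega
  · have := numCycles_mul_swap_add_one fun h => hE (EqvGen.eqvGen_le (stepRel_mul_le x y') _ _ h)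
    rw [mul_assoc, hy] at this
    have := numClasses_addPair_add_one hE
    omega

theorem two_mul_numClasses_sup_add_le {a b c : Perm α} (ha : Involutive a) (hb : Involutive b)
    (hc : Involutive c) (ha' : ∀ x, a x ≠ x) (hb' : ∀ x, b x ≠ x) (hc' : ∀ x, c x ≠ x) :
    2 * (numClasses (a.stepRel ⊔ b.stepRel) + numClasses (b.stepRel ⊔ c.stepRel) +
      numClasses (a.stepRel ⊔ c.stepRel)) ≤
      Nat.card α + 4 * numClasses (a.stepRel ⊔ b.stepRel ⊔ c.stepRel) := by
  have hJ := numCycles_add_numCycles_add_numCycles_mul_le (a * b) (b * c)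
  rw [show a * b * (b * c) = a * c by ext x; simp [hb _]] at hJ
  have := two_mul_numClasses_sup_le_numCycles_mul ha hb ha' hb'
  have := two_mul_numClasses_sup_le_numCycles_mul hb hc hb' hc'
  have := two_mul_numClasses_sup_le_numCycles_mul ha hc ha' hc'
  have := numClasses_sup_mul_le ha hb hc
  omega

end Equiv.Perm

namespace CGraph

open Relation Equiv.Perm

variable {C V : Type}

def perm (G : CGraph C V) (c : C) : Perm V := Involutive.toPerm (G.inv c) (G.invol c)

@[simp]
theorem perm_apply (G : CGraph C V) (c : C) (v : V) : G.perm c v = G.inv c v := rfl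

theorem g_pair (G : CGraph C V) (j k : C) :
    G.g {j, k} = numClasses ((G.perm j).stepRel ⊔ (G.perm k).stepRel) := by
  show numClasses _ = _
  congr 1
  ext v w
  simp [stepRel]

theorem g_triple (G : CGraph C V) (j k l : C) :
    G.g {j, k, l} =
      numClasses ((G.perm j).stepRel ⊔ (G.perm k).stepRel ⊔ (G.perm l).stepRel) := by
  show numClasses _ = _
  congr 1
  ext v w
  simp [stepRel, or_assoc]

theorem two_mul_g_pair_add_le [Finite V] (G : CGraph C V) (j k l : C) :
    2 * (G.g {j, k} + G.g {k, l} + G.g {j, l}) ≤ Nat.card V + 4 * G.g {j, k, l} := by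
  classical
  rw [g_pair, g_pair, g_pair, g_triple]
  exact two_mul_numClasses_sup_add_le (G.invol j) (G.invol k) (G.invol l)
    (G.no_fixed j) (G.no_fixed k) (G.no_fixed l)

theorem isCyclicPerm_fin_four_iff {σ : Perm (Fin 4)} :
    IsCyclicPerm σ ↔ ∀ c, σ c ≠ c ∧ σ (σ c) ≠ c := by
  refine ⟨fun ⟨hcyc, hfix⟩ c => ⟨hfix c, fun h2 => ?_⟩,
    fun h => ⟨⟨0, (h 0).1, fun y _ => ?_⟩, fun c => (h c).1⟩⟩
  · have hsupp : σ.support = Finset.univ :=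
      Finset.eq_univ_of_forall fun c => mem_support.2 (hfix c)
    have := orderOf_le_of_pow_eq_one two_pos (hcyc.pow_eq_one_iff.2 ⟨c, hfix c, h2⟩)
    simp [hcyc.orderOf, hsupp] at this
  · revert σ y
    decide

theorem IsCyclicPerm.fin_four_cases {σ : Perm (Fin 4)} (hσ : IsCyclicPerm σ) :
    (σ 0 = 1 ∧ σ 1 = 2 ∧ σ 2 = 3 ∧ σ 3 = 0) ∨ (σ 0 = 1 ∧ σ 1 = 3 ∧ σ 2 = 0 ∧ σ 3 = 2) ∨
    (σ 0 = 2 ∧ σ 1 = 3 ∧ σ 2 = 1 ∧ σ 3 = 0) ∨ (σ 0 = 2 ∧ σ 1 = 0 ∧ σ 2 = 3 ∧ σ 3 = 1) ∨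
    (σ 0 = 3 ∧ σ 1 = 2 ∧ σ 2 = 0 ∧ σ 3 = 1) ∨ (σ 0 = 3 ∧ σ 1 = 0 ∧ σ 2 = 1 ∧ σ 3 = 2) := by
  rw [isCyclicPerm_fin_four_iff] at hσ
  revert σ
  decide

theorem exists_isCyclicPerm_apply_apply_eq {r s : Fin 4} (h : r ≠ s) :
    ∃ σ : Perm (Fin 4), IsCyclicPerm σ ∧ σ (σ r) = s := by
  simp only [isCyclicPerm_fin_four_iff]
  revert r s
  decide

theorem finsum_isCyclicPerm_fin_four {M : Type*} [AddCommMonoid M] (F : Fin 4 → M) :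
    ∑ᶠ σ : {σ : Perm (Fin 4) // IsCyclicPerm σ}, F (σ.1 (σ.1 0)) = 2 • (F 1 + F 2 + F 3) := by
  set S := Finset.univ.filter fun σ : Perm (Fin 4) => ∀ c, σ c ≠ c ∧ σ (σ c) ≠ c
  have himage : S.image (fun σ => σ (σ 0)) = {1, 2, 3} := by decide
  have hfiber : ∀ k ∈ ({1, 2, 3} : Finset (Fin 4)), (S.filter fun σ => σ (σ 0) = k).card = 2 := by
    decide
  rw [finsum_subtype_eq_finsum_cond (f := fun σ => F (σ (σ 0))) IsCyclicPerm,
    finsum_cond_eq_sum_of_cond_iff _ (t := S) fun _ => by simp [S, isCyclicPerm_fin_four_iff],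
    Finset.sum_comp F fun σ : Perm (Fin 4) => σ (σ 0), himage,
    Finset.sum_congr rfl fun k hk => by rw [hfiber k hk], ← Finset.smul_sum]
  simp [add_assoc]

theorem rho_eq_sum_g_pair (G : CGraph (Fin 4) V) (hconn : G.Conn) (σ : Perm (Fin 4)) :
    G.rho σ = (2 + Nat.card V - ∑ c, (G.g {c, σ c} : ℚ)) / 2 := by
  rw [rho, chi, finsum_eq_sum_of_fintype, show G.g Set.univ = 1 from hconn]
  simp only [Nat.card_eq_fintype_card, Fintype.card_fin]
  push_cast
  ring

theorem sum_ite_g_pair_fin_four (G : CGraph (Fin 4) V) :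
    (∑ r : Fin 4, ∑ s : Fin 4, if r = s then 0 else (G.g {r, s} : ℚ)) =
      2 * (G.g {0, 1} + G.g {0, 2} + G.g {0, 3} + G.g {1, 2} + G.g {1, 3} + G.g {2, 3}) := by
  simp [Fin.sum_univ_four, Set.pair_comm]
  ring

/-- The four bounds `two_mul_g_pair_add_le` for the 3-residues add up to `hsum`, so all are
sharp. -/
theorem g_pair_eq_g_pair_compl [Finite V] {p : ℕ} (G : CGraph (Fin 4) V)
    (horder : Nat.card V = 2 * p) (hcr : ∀ i : Fin 4, G.g {c | c ≠ i} = 1)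
    (hsum : G.g {0, 1} + G.g {0, 2} + G.g {0, 3} + G.g {1, 2} + G.g {1, 3} + G.g {2, 3} =
      2 * p + 4) :
    G.g {0, 1} = G.g {2, 3} ∧ G.g {0, 2} = G.g {1, 3} ∧ G.g {0, 3} = G.g {1, 2} ∧
      G.g {0, 1} + G.g {0, 2} + G.g {0, 3} = p + 2 := by
  have link : ∀ j k l i : Fin 4, ({j, k, l} : Set (Fin 4)) = {c | c ≠ i} →
      G.g {j, k} + G.g {k, l} + G.g {j, l} ≤ p + 2 := fun j k l i h => by
    have := G.two_mul_g_pair_add_le j k l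
    rw [h, hcr, horder] at this
    omega
  have h0 := link 1 2 3 0 (by ext c; fin_cases c <;> simp)
  have h1 := link 0 2 3 1 (by ext c; fin_cases c <;> simp)
  have h2 := link 0 1 3 2 (by ext c; fin_cases c <;> simp)
  have h3 := link 0 1 2 3 (by ext c; fin_cases c <;> simp)
  omega

theorem rho_eq_g_pair_sub_one {p : ℕ} (G : CGraph (Fin 4) V) (hconn : G.Conn)
    (horder : Nat.card V = 2 * p) (h01 : G.g {0, 1} = G.g {2, 3})
    (h02 : G.g {0, 2} = G.g {1, 3}) (h03 : G.g {0, 3} = G.g {1, 2})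
    (htot : G.g {0, 1} + G.g {0, 2} + G.g {0, 3} = p + 2)
    {σ : Perm (Fin 4)} (hσ : IsCyclicPerm σ) (a : Fin 4) :
    G.rho σ = (G.g {a, σ (σ a)} : ℚ) - 1 := by
  have hsymm : ∀ j k : Fin 4, G.g {j, k} = G.g {k, j} := fun _ _ => by rw [Set.pair_comm]
  have q01 : (G.g {0, 1} : ℚ) = G.g {2, 3} := by exact_mod_cast h01
  have q02 : (G.g {0, 2} : ℚ) = G.g {1, 3} := by exact_mod_cast h02
  have q03 : (G.g {0, 3} : ℚ) = G.g {1, 2} := by exact_mod_cast h03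
  have qtot : (G.g {0, 1} + G.g {0, 2} + G.g {0, 3} : ℚ) = p + 2 := by exact_mod_cast htot
  rw [rho_eq_sum_g_pair G hconn, horder]
  rcases hσ.fin_four_cases with ⟨e0, e1, e2, e3⟩ | ⟨e0, e1, e2, e3⟩ | ⟨e0, e1, e2, e3⟩ |
      ⟨e0, e1, e2, e3⟩ | ⟨e0, e1, e2, e3⟩ | ⟨e0, e1, e2, e3⟩ <;>
    fin_cases a <;>
    simp only [Fin.sum_univ_four, Fin.zero_eta, Fin.mk_one, Fin.reduceFinMk, e0, e1, e2, e3,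
      hsymm 1 0, hsymm 2 0, hsymm 3 0, hsymm 2 1, hsymm 3 1, hsymm 3 2] <;>
    push_cast <;>
    linarith

theorem omegaG_eq_of_rho_eq (G : CGraph (Fin 4) V)
    (hρ : ∀ σ, IsCyclicPerm σ → ∀ a, G.rho σ = (G.g {a, σ (σ a)} : ℚ) - 1) :
    G.omegaG = G.g {0, 1} + G.g {0, 2} + G.g {0, 3} - 3 := by
  let F : Fin 4 → ℚ := fun k => G.g {0, k} - 1
  have hF : ∀ σ : {σ // IsCyclicPerm σ}, G.rho σ.1 = F (σ.1 (σ.1 0)) := fun σ => hρ σ.1 σ.2 0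
  rw [omegaG, finsum_congr hF, finsum_isCyclicPerm_fin_four F, nsmul_eq_mul]
  ring

theorem eq_sub_one_of_isLeast_rho {m : ℕ} {ρmin : ℚ} (G : CGraph (Fin 4) V)
    (hρ : ∀ σ, IsCyclicPerm σ → ∀ a, G.rho σ = (G.g {a, σ (σ a)} : ℚ) - 1)
    (hrho : IsLeast {x : ℚ | ∃ σ : Perm (Fin 4), IsCyclicPerm σ ∧ G.rho σ = x} ρmin)
    (hm : IsLeast {k : ℕ | ∃ r s : Fin 4, r ≠ s ∧ G.g {r, s} = k} m) :
    ρmin = m - 1 := by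
  obtain ⟨σ, hσ, rfl⟩ := hrho.1
  obtain ⟨r, s, hrs, rfl⟩ := hm.1
  obtain ⟨τ, hτ, hτrs⟩ := exists_isCyclicPerm_apply_apply_eq hrs
  have hle : G.rho σ ≤ G.g {r, s} - 1 := hτrs ▸ hρ τ hτ r ▸ hrho.2 ⟨τ, hτ, rfl⟩
  have hge : G.g {r, s} ≤ G.g {0, σ (σ 0)} :=
    hm.2 ⟨0, σ (σ 0), ((isCyclicPerm_fin_four_iff.1 hσ) 0).2.symm, rfl⟩
  rw [hρ σ hσ 0] at hle ⊢
  have : (G.g {r, s} : ℚ) ≤ G.g {0, σ (σ 0)} := by exact_mod_cast hge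
  linarith

end CGraph

open CGraph in
/-- Proposition `G-degree-regulargenus(n=3)`: if `Γ` is an order-`2p`
crystallization of a closed 3-manifold (`g_î = 1` for all `i` and `χ(K(Γ)) = 0`), `ρ` is its
regular genus (the least of the genera `ρ_ε(Γ)`) and `m = min{g_{ij}}`, then
`ω_G(Γ) − 3ρ(Γ) = p + 2 − 3·min{g_{ij}}`. -/
theorem stmt10 {p m : ℕ} {ρmin : ℚ} {V : Type} [Finite V]
    (G : CGraph (Fin 4) V) (hconn : G.Conn) (horder : Nat.card V = 2 * p)
    (hcr : ∀ i : Fin 4, G.g {c | c ≠ i} = 1)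
    (hchi : (∑ i : Fin 4, (G.g {c | c ≠ i} : ℚ)) -
        (∑ r : Fin 4, ∑ s : Fin 4, if r = s then 0 else (G.g {r, s} : ℚ)) / 2 +
        2 * (p : ℚ) = 0)
    (hrho : IsLeast {x : ℚ | ∃ σ : Equiv.Perm (Fin 4), IsCyclicPerm σ ∧ G.rho σ = x} ρmin)
    (hm : IsLeast {k : ℕ | ∃ r s : Fin 4, r ≠ s ∧ G.g {r, s} = k} m) :
    G.omegaG - 3 * ρmin = (p : ℚ) + 2 - 3 * (m : ℚ) := by
  have hsum : G.g {0, 1} + G.g {0, 2} + G.g {0, 3} + G.g {1, 2} + G.g {1, 3} + G.g {2, 3} =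
      2 * p + 4 := by
    simp only [hcr, sum_ite_g_pair_fin_four, Nat.cast_one, Fin.sum_const, nsmul_eq_mul] at hchi
    have : (G.g {0, 1} + G.g {0, 2} + G.g {0, 3} + G.g {1, 2} + G.g {1, 3} + G.g {2, 3} : ℚ) =
        2 * p + 4 := by linarith
    exact_mod_cast this
  obtain ⟨h01, h02, h03, htot⟩ := G.g_pair_eq_g_pair_compl horder hcr hsum
  have hρ : ∀ σ, IsCyclicPerm σ → ∀ a, G.rho σ = (G.g {a, σ (σ a)} : ℚ) - 1 :=
    fun _ => G.rho_eq_g_pair_sub_one hconn horder h01 h02 h03 htot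
  have htot' : (G.g {0, 1} + G.g {0, 2} + G.g {0, 3} : ℚ) = p + 2 := by exact_mod_cast htot
  rw [G.omegaG_eq_of_rho_eq hρ, G.eq_sub_one_of_isLeast_rho hρ hrho hm]
  linarith
end
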